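/- Let (W, S) be a Coxeter system, ε an automorphism, J ⊆ S, and (J_n, J'_n, u_n)_{n≥0} ∈ S(J, ε). Then for every n ≥ 0, u_0 u_1 ⋯ u_n is the unique minimal length element of the double coset W_{J'} · w · W_{J_n}, where w = u_0 u_1 ⋯ u_N for any N large enough that u_{N+1} = u_{N+2} = ⋯ = 1. -/

import Mathlib

namespace Lusztig

variable {B : Type*} {W : Type*} [Group W] {M : CoxeterMatrix B}

/-- The standard parabolic subgroup `W_K` generated by the simple reflections in `K`. -/
def WP (cs : CoxeterSystem M W) (K : Set B) : Subgroup W :=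
  Subgroup.closure (cs.simple '' K)

/-- `w` is the unique minimal length element of its left coset `W_K w`
(i.e. `w ∈ ᴷW`). -/
def IsMinL (cs : CoxeterSystem M W) (K : Set B) (w : W) : Prop :=
  ∀ a ∈ WP cs K, a * w ≠ w → cs.length w < cs.length (a * w)

/-- `w` is the unique minimal length element of its right coset `w W_K`
(i.e. `w ∈ Wᴷ`). -/
def IsMinR (cs : CoxeterSystem M W) (K : Set B) (w : W) : Prop :=
  ∀ b ∈ WP cs K, w * b ≠ w → cs.length w < cs.length (w * b)

/-- `x` is the unique minimal length element of its double coset `W_K x W_{K'}`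
(i.e. `x ∈ ᴷWᴷ'`). -/
def IsMinDC (cs : CoxeterSystem M W) (K K' : Set B) (x : W) : Prop :=
  ∀ a ∈ WP cs K, ∀ b ∈ WP cs K', a * x * b ≠ x → cs.length x < cs.length (a * x * b)

/-- `x` is the unique minimal length element of the double coset `W_K g W_{K'}`. -/
def IsMinOf (cs : CoxeterSystem M W) (K K' : Set B) (g x : W) : Prop :=
  (∃ a ∈ WP cs K, ∃ b ∈ WP cs K', x = a * g * b) ∧
  ∀ a ∈ WP cs K, ∀ b ∈ WP cs K', a * g * b ≠ x → cs.length x < cs.length (a * g * b)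

/-- `Ad(x)J ∩ S`, as a set of indices of simple reflections:
the set of `s` with `simple s = x * (simple t) * x⁻¹` for some `t ∈ J`. -/
def AdSet (cs : CoxeterSystem M W) (x : W) (J : Set B) : Set B :=
  {s | ∃ t ∈ J, cs.simple s = x * cs.simple t * x⁻¹}

/-- The product `u 0 * u 1 * ⋯ * u (n-1)`. -/
def pr (u : ℕ → W) (n : ℕ) : W := ((List.range n).map u).prod

/-- Lusztig's set `S(J, ε)` (2.3): sequences `(J_n, J'_n, u_n)` with
`J = J_0 ⊇ J_1 ⊇ ⋯`, `ε(J_n) = ε(J_{n-1}) ∩ Ad(u_0⋯u_{n-1})J_{n-1}` (n ≥ 1),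
`J'_0 = ε(J) = J'`, `J'_n = J_{n-1} ∩ Ad(u_0⋯u_{n-1})⁻¹ε(J_{n-1})` (n ≥ 1),
`u_n ∈ W_{J_{n-1}}` (n ≥ 1), `u_n ∈ {}^{J'_n}W ∩ W^{J_n}` (n ≥ 0).
Here `ε` is encoded by its restriction `f : B ≃ B` to the simple reflections. -/
structure SSeq (cs : CoxeterSystem M W) (f : B ≃ B) (J : Set B) where
  Jn : ℕ → Set B
  J'n : ℕ → Set B
  u : ℕ → W
  hJ0 : Jn 0 = J
  hJ'0 : J'n 0 = f '' J
  hmono : ∀ n, Jn (n + 1) ⊆ Jn n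
  hb : ∀ n, f '' Jn (n + 1) = (f '' Jn n) ∩ AdSet cs (pr u (n + 1)) (Jn n)
  hc : ∀ n, J'n (n + 1) = Jn n ∩ AdSet cs (pr u (n + 1))⁻¹ (f '' Jn n)
  hd : ∀ n, u (n + 1) ∈ WP cs (Jn n)
  he : ∀ n, IsMinL cs (J'n n) (u n) ∧ IsMinR cs (Jn n) (u n)

/-- Lusztig's set `T(J, ε)` (2.2): sequences `(J_n, w_n)` with
`J = J_0 ⊇ J_1 ⊇ ⋯`, `J_n = J_{n-1} ∩ ε⁻¹(Ad(w_{n-1})J_{n-1})` (n ≥ 1),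
`w_n ∈ {}^{ε(J_n)}W^{J_n}` (n ≥ 0), `w_n ∈ W_{ε(J_n)} w_{n-1} W_{J_{n-1}}` (n ≥ 1). -/
structure TSeq (cs : CoxeterSystem M W) (f : B ≃ B) (J : Set B) where
  Jn : ℕ → Set B
  w : ℕ → W
  hJ0 : Jn 0 = J
  hmono : ∀ n, Jn (n + 1) ⊆ Jn n
  hb : ∀ n, Jn (n + 1) = Jn n ∩ f.symm '' AdSet cs (w n) (Jn n)
  hc : ∀ n, IsMinDC cs (f '' Jn n) (Jn n) (w n)
  hd : ∀ n, ∃ a ∈ WP cs (f '' Jn (n + 1)), ∃ b ∈ WP cs (Jn n), w (n + 1) = a * w n * b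

/-!
The exchange condition comes from Tits' argument: `W` acts on `W × ZMod 2`, `s i` conjugating the
first coordinate and flipping the sign at `s i`, and the sign that `(π ω)⁻¹` picks up at `t` is
the parity of the number of occurrences of `t` in the left inversion sequence of `ω`. This parity
thus depends only on `π ω`; when `s i` shortens `π ω` it is odd, so `s i` occurs in the sequence,
and deleting the corresponding letter of `ω` gives `s i * π ω`. Exchange yields the standard facts
on minimal coset representatives, among them Deodhar's lemma and the fact that if `x` is minimal
both in `W_K x` and in `x W_L`, then every element of `W_K x W_L` is `a x b` with
`ℓ (a x b) = ℓ a + ℓ x + ℓ b`.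

Let `x_n = u_0 ⋯ u_n`. By induction on `n`, `x_n ∈ ᴶ'W`, `x_n ∈ W^{J_n}`, and every `p ∈ J'` with
`s_p = x_n s_q x_n⁻¹` for some `q ∈ J_n` lies in `ε(J_n)`; each step applies Deodhar's lemma to
`x_n` and `s_p`. Since `u_{n+1} ⋯ u_N ∈ W_{J_n}`, the double coset `W_{J'} w W_{J_n}` is that of
`x_n`.
-/

open CoxeterSystem

section Coxeter

variable (cs : CoxeterSystem M W)

local prefix:100 "s" => cs.simple
local prefix:100 "π" => cs.wordProd
local prefix:100 "ℓ" => cs.length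

/-! ### The exchange condition -/

section Parity

open scoped Classical

lemma simple_conj_eq_iff (i : B) (t u : W) : s i * t * s i = u ↔ t = s i * u * s i := by
  constructor
  · rintro rfl
    simp [mul_assoc]
  · rintro rfl
    simp [mul_assoc]

lemma simple_conj_eq_self_iff (i : B) (t : W) : s i * t * s i = s i ↔ t = s i := by
  rw [simple_conj_eq_iff, simple_mul_simple_self, one_mul]

/-- `s i` acting on pairs (reflection, sign) as in Tits' proof of the exchange condition. -/
noncomputable def parityPerm (i : B) : Equiv.Perm (W × ZMod 2) :=
  Function.Involutive.toPerm (fun p => (s i * p.1 * s i, p.2 + if p.1 = s i then 1 else 0)) <| by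
    rintro ⟨t, ε⟩
    refine Prod.ext ?_ ?_
    · simp [mul_assoc]
    · simp only [simple_conj_eq_self_iff, add_assoc, CharTwo.add_self_eq_zero, add_zero]

lemma parityPerm_apply (i : B) (t : W) (ε : ZMod 2) :
    parityPerm cs i (t, ε) = (s i * t * s i, ε + if t = s i then 1 else 0) := rfl

lemma pow_apply_of_forall_apply {G : Type*} [Group G] (g : Equiv.Perm (G × ZMod 2)) (p : G)
    (χ : G → ZMod 2) (hg : ∀ t ε, g (t, ε) = (p * t * p⁻¹, ε + χ t)) (k : ℕ) (t : G)
    (ε : ZMod 2) : (g ^ k) (t, ε) =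
      (p ^ k * t * (p ^ k)⁻¹, ε + ∑ j ∈ Finset.range k, χ (p ^ j * t * (p ^ j)⁻¹)) := by
  induction k with
  | zero => simp
  | succ k ih =>
    rw [pow_succ', Equiv.Perm.mul_apply, ih, hg, Finset.sum_range_succ, pow_succ']
    simp only [mul_inv_rev, mul_assoc, add_assoc]

lemma inv_pow_mul_simple (i i' : B) (j : ℕ) :
    ((s i * s i') ^ j)⁻¹ * s i' = s i' * (s i * s i') ^ j := by
  have h : MulAut.conj (s i') (s i * s i') = (s i * s i')⁻¹ := by
    simp [MulAut.conj_apply, mul_assoc]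
  have := congrArg (· * s i') (map_pow (MulAut.conj (s i')) (s i * s i') j)
  simp only [h, MulAut.conj_apply, inv_simple, inv_pow, simple_mul_simple_cancel_right] at this
  simp [this]

lemma sum_range_two_mul {A : Type*} [AddCommMonoid A] (f : ℕ → A) (k : ℕ) :
    ∑ c ∈ Finset.range (2 * k), f c = ∑ j ∈ Finset.range k, (f (2 * j) + f (2 * j + 1)) := by
  induction k with
  | zero => simp
  | succ k ih =>
    rw [mul_add, mul_one, Finset.sum_range_succ, Finset.sum_range_succ, ih, Finset.sum_range_succ,
      add_assoc]

lemma conj_pow_eq_simple_mul_pow_iff (i i' : B) (j c : ℕ) (t : W) :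
    (s i * s i') ^ j * t * ((s i * s i') ^ j)⁻¹ = s i' * (s i * s i') ^ c ↔
      t = s i' * (s i * s i') ^ (2 * j + c) := by
  have key : ((s i * s i') ^ j)⁻¹ * (s i' * (s i * s i') ^ c) * (s i * s i') ^ j =
      s i' * (s i * s i') ^ (2 * j + c) := by
    rw [← mul_assoc, inv_pow_mul_simple]
    simp only [mul_assoc, ← pow_add]
    ring_nf
  rw [← key]
  constructor
  · intro h
    rw [← h]
    group
  · rintro rfl
    group

lemma parityPerm_liftable : M.IsLiftable (parityPerm cs) := by
  intro i i'
  have hg : ∀ t ε, (parityPerm cs i * parityPerm cs i') (t, ε) = (s i * s i' * t * (s i * s i')⁻¹,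
      ε + ((if t = s i' * (s i * s i') ^ 0 then 1 else 0) +
        if t = s i' * (s i * s i') ^ 1 then 1 else 0)) := by
    intro t ε
    rw [Equiv.Perm.mul_apply, parityPerm_apply, parityPerm_apply, simple_conj_eq_iff]
    simp only [pow_zero, pow_one, mul_one, mul_inv_rev, inv_simple, mul_assoc, add_assoc]
  ext ⟨t, ε⟩
  · rw [pow_apply_of_forall_apply _ _ _ hg, simple_mul_simple_pow]
    simp
  · rw [pow_apply_of_forall_apply _ _ _ hg]
    simp only [conj_pow_eq_simple_mul_pow_iff, add_zero, Equiv.Perm.one_apply]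
    -- over `c < 2m`, `c ↦ (s i * s i') ^ c` runs twice through a period, hitting every value evenly
    rw [← sum_range_two_mul (fun c => if t = s i' * (s i * s i') ^ c then (1 : ZMod 2) else 0),
      two_mul, Finset.sum_range_add]
    simp only [pow_add, simple_mul_simple_pow, one_mul, CharTwo.add_self_eq_zero, add_zero]

noncomputable def parityRep : W →* Equiv.Perm (W × ZMod 2) :=
  cs.lift ⟨parityPerm cs, parityPerm_liftable cs⟩

lemma parityRep_wordProd_inv (ω : List B) (t : W) (ε : ZMod 2) :
    parityRep cs (π ω)⁻¹ (t, ε) = ((π ω)⁻¹ * t * π ω, ε + (cs.leftInvSeq ω).count t) := by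
  induction ω generalizing t ε with
  | nil => simp
  | cons i ω ih =>
    have hconj : t = MulAut.conj (s i) (s i * t * s i) := by simp [mul_assoc]
    rw [wordProd_cons, mul_inv_rev, inv_simple, map_mul, Equiv.Perm.mul_apply, parityRep,
      lift_apply_simple, parityPerm_apply, ← parityRep, ih, leftInvSeq, List.count_cons,
      hconj, List.count_map_of_injective _ _ (MulAut.conj (s i)).injective, ← hconj]
    simp only [beq_iff_eq, eq_comm (a := s i), Nat.cast_add, Nat.cast_ite, Nat.cast_one,
      Nat.cast_zero, mul_assoc]
    congr 1
    abel

lemma count_leftInvSeq_eq {ω ω' : List B} (h : π ω = π ω') (t : W) :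
    ((cs.leftInvSeq ω).count t : ZMod 2) = (cs.leftInvSeq ω').count t := by
  have h1 := parityRep_wordProd_inv cs ω t 0
  rw [h, parityRep_wordProd_inv] at h1
  simpa using (congrArg Prod.snd h1).symm

lemma simple_mem_leftInvSeq {ω : List B} {i : B}
    (h : ℓ (s i * π ω) < ℓ (π ω)) : s i ∈ cs.leftInvSeq ω := by
  obtain ⟨ρ, hρ, hρω⟩ := cs.exists_isReduced (s i * π ω)
  have hnot : s i ∉ cs.leftInvSeq ρ := fun hmem => by
    have := (cs.isLeftInversion_of_mem_leftInvSeq hρ hmem).2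
    rw [← hρω, simple_mul_simple_cancel_left] at this
    omega
  have hcount0 : ((cs.leftInvSeq ρ).map (MulAut.conj (s i))).count (s i) = 0 := by
    rw [List.count_eq_zero, List.mem_map]
    rintro ⟨x, hx, hxi⟩
    rw [MulAut.conj_apply, inv_simple, simple_conj_eq_self_iff] at hxi
    exact hnot (hxi ▸ hx)
  have hcount := count_leftInvSeq_eq cs (ω := i :: ρ) (ω' := ω)
    (by rw [wordProd_cons, ← hρω, simple_mul_simple_cancel_left]) (s i)
  rw [leftInvSeq, List.count_cons, hcount0] at hcount
  refine List.count_pos_iff.mp (Nat.pos_of_ne_zero fun h0 => ?_)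
  rw [h0] at hcount
  simp at hcount

end Parity

lemma exists_eraseIdx_of_length_simple_mul_lt {ω : List B} {i : B}
    (h : ℓ (s i * π ω) < ℓ (π ω)) : ∃ j < ω.length, s i * π ω = π (ω.eraseIdx j) := by
  obtain ⟨j, hj, hget⟩ := List.mem_iff_getElem.mp (simple_mem_leftInvSeq cs h)
  rw [length_leftInvSeq] at hj
  refine ⟨j, hj, ?_⟩
  rw [← getD_leftInvSeq_mul_wordProd, List.getD_eq_getElem _ _ (by simpa using hj), hget]

lemma exists_isReduced_sublist (ω : List B) :
    ∃ ω' : List B, ω'.Sublist ω ∧ cs.IsReduced ω' ∧ π ω' = π ω := by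
  induction ω with
  | nil => exact ⟨[], List.Sublist.slnil, by simp [CoxeterSystem.IsReduced], rfl⟩
  | cons i ω ih =>
    obtain ⟨ω₁, hsub, hred, hπ⟩ := ih
    rcases cs.length_simple_mul (π ω₁) i with hup | hdown
    · refine ⟨i :: ω₁, hsub.cons_cons i, ?_, by rw [wordProd_cons, wordProd_cons, hπ]⟩
      rw [CoxeterSystem.IsReduced, wordProd_cons, hup, hred, List.length_cons]
    · obtain ⟨j, hj, hdel⟩ :=
        exists_eraseIdx_of_length_simple_mul_lt cs (i := i) (ω := ω₁) (by omega)
      refine ⟨ω₁.eraseIdx j, ((List.eraseIdx_sublist ω₁ j).trans hsub).cons i, ?_, ?_⟩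
      · have := List.length_eraseIdx_add_one hj
        unfold CoxeterSystem.IsReduced at hred ⊢
        rw [← hdel]
        omega
      · rw [← hdel, hπ, wordProd_cons]

lemma length_mul_mul_le (a x b : W) : ℓ (a * x * b) ≤ ℓ a + ℓ x + ℓ b :=
  (cs.length_mul_le _ b).trans (Nat.add_le_add_right (cs.length_mul_le a x) _)

lemma simple_mul_ne_self (x : W) (i : B) : s i * x ≠ x :=
  fun h => cs.length_simple_mul_ne x i (congrArg _ h)

/-! ### Parabolic subgroups -/

variable {cs}

lemma simple_mem_WP {K : Set B} {i : B} (hi : i ∈ K) : s i ∈ WP cs K :=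
  Subgroup.subset_closure ⟨i, hi, rfl⟩

lemma wordProd_mem_WP {K : Set B} {ω : List B} (hω : ∀ j ∈ ω, j ∈ K) : π ω ∈ WP cs K := by
  induction ω with
  | nil => exact Subgroup.one_mem _
  | cons i ω ih =>
    rw [wordProd_cons]
    exact Subgroup.mul_mem _ (simple_mem_WP (hω i List.mem_cons_self))
      (ih fun j hj => hω j (List.mem_cons_of_mem i hj))

lemma WP_mono {K L : Set B} (h : K ⊆ L) : WP cs K ≤ WP cs L :=
  Subgroup.closure_mono (Set.image_mono h)

lemma mem_WP_univ (w : W) : w ∈ WP cs Set.univ := by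
  rw [WP, Set.image_univ, subgroup_closure_range_simple]
  exact Subgroup.mem_top w

lemma WP_empty : WP cs ∅ = ⊥ := by
  rw [WP, Set.image_empty, Subgroup.closure_empty]

lemma exists_word_of_mem_WP {K : Set B} {a : W} (ha : a ∈ WP cs K) :
    ∃ ω : List B, (∀ j ∈ ω, j ∈ K) ∧ π ω = a := by
  induction ha using Subgroup.closure_induction_left with
  | one => exact ⟨[], by simp, rfl⟩
  | mul_left _ hx _ _ ih | inv_mul_cancel _ hx _ _ ih =>
    obtain ⟨i, hi, rfl⟩ := hx
    obtain ⟨ω, hω, rfl⟩ := ih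
    exact ⟨i :: ω, by simpa [hi] using hω, by simp [wordProd_cons]⟩

lemma exists_isReduced_of_mem_WP {K : Set B} {a : W} (ha : a ∈ WP cs K) :
    ∃ ω : List B, (∀ j ∈ ω, j ∈ K) ∧ cs.IsReduced ω ∧ π ω = a := by
  obtain ⟨ω, hω, rfl⟩ := exists_word_of_mem_WP ha
  obtain ⟨ω', hsub, hred, hπ⟩ := exists_isReduced_sublist cs ω
  exact ⟨ω', fun j hj => hω j (hsub.subset hj), hred, hπ⟩

lemma exists_length_simple_mul_lt_of_mem_WP {K : Set B} {a : W} (ha : a ∈ WP cs K) (h1 : a ≠ 1) :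
    ∃ i ∈ K, ℓ (s i * a) < ℓ a := by
  obtain ⟨_ | ⟨i, ω⟩, hK, hred, rfl⟩ := exists_isReduced_of_mem_WP ha
  · exact absurd rfl h1
  · refine ⟨i, hK i List.mem_cons_self, ?_⟩
    rw [wordProd_cons, simple_mul_simple_cancel_left, ← wordProd_cons, hred, List.length_cons]
    exact Nat.lt_succ_of_le (cs.length_wordProd_le ω)

/-- Exchange in a reduced word of `x` followed by a reduced word of `y`: the deleted letter lies
in one of the two parts. -/
lemma exchange_mul {L : Set B} {x y : W} (hy : y ∈ WP cs L) {i : B}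
    (h : ℓ (s i * (x * y)) < ℓ (x * y)) :
    ℓ (s i * x) < ℓ x ∨ ∃ y' ∈ WP cs L, s i * (x * y) = x * y' ∧ ℓ y' < ℓ y := by
  obtain ⟨ρ, hρ, rfl⟩ := cs.exists_isReduced x
  obtain ⟨τ, hτL, hτ, rfl⟩ := exists_isReduced_of_mem_WP hy
  rw [← wordProd_append] at h
  obtain ⟨j, hj, hdel⟩ := exists_eraseIdx_of_length_simple_mul_lt cs h
  rw [wordProd_append] at hdel
  rcases lt_or_ge j ρ.length with hjρ | hjρ
  · left
    rw [List.eraseIdx_append_of_lt_length hjρ, wordProd_append, ← mul_assoc,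
      mul_left_inj] at hdel
    have := List.length_eraseIdx_add_one hjρ
    have := cs.length_wordProd_le (ρ.eraseIdx j)
    rw [hdel, hρ]
    omega
  · right
    rw [List.eraseIdx_append_of_length_le hjρ, wordProd_append] at hdel
    refine ⟨π (τ.eraseIdx (j - ρ.length)),
      wordProd_mem_WP fun k hk => hτL k ((List.eraseIdx_sublist τ _).subset hk), hdel, ?_⟩
    rw [List.length_append] at hj
    have := List.length_eraseIdx_add_one (l := τ) (i := j - ρ.length) (by omega)
    have := cs.length_wordProd_le (τ.eraseIdx (j - ρ.length))
    rw [hτ]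
    omega

/-! ### Minimal coset representatives -/

section MinimalRepresentatives

variable {K L : Set B} {x : W}

lemma exists_simple_mul_mul_mul_eq (hxK : ∀ a ∈ WP cs K, ℓ x ≤ ℓ (a * x)) {i : B} (hi : i ∈ K)
    {a b : W} (ha : a ∈ WP cs K) (hb : b ∈ WP cs L) (hlen : ℓ (a * x * b) = ℓ a + ℓ x + ℓ b) :
    ∃ a' ∈ WP cs K, ∃ b' ∈ WP cs L,
      s i * (a * x * b) = a' * x * b' ∧ ℓ (s i * (a * x * b)) = ℓ a' + ℓ x + ℓ b' := by
  have hsa : s i * a ∈ WP cs K := Subgroup.mul_mem _ (simple_mem_WP hi) ha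
  have hassoc : s i * (a * x * b) = s i * a * x * b := by simp only [mul_assoc]
  rcases cs.length_simple_mul (a * x * b) i with hup | hdown
  · refine ⟨s i * a, hsa, b, hb, hassoc, ?_⟩
    have := length_mul_mul_le cs (s i * a) x b
    have := cs.length_simple_mul a i
    rw [hassoc] at hup ⊢
    omega
  rcases exchange_mul hb (x := a * x) (i := i) (by omega) with hax | ⟨b', hb', hdel, hb'b⟩
  · rcases exchange_mul (mem_WP_univ x) hax with hsa_lt | ⟨x', -, hdel, hx'⟩
    · refine ⟨s i * a, hsa, b, hb, hassoc, ?_⟩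
      have := cs.length_simple_mul a i
      omega
    · -- deleting a letter of `x` would shorten `x` within `W_K x`
      have hconj : a⁻¹ * s i * a ∈ WP cs K :=
        Subgroup.mul_mem _ (Subgroup.mul_mem _ (Subgroup.inv_mem _ ha) (simple_mem_WP hi)) ha
      have := hxK _ hconj
      rw [mul_assoc, mul_assoc, hdel, inv_mul_cancel_left] at this
      omega
  · refine ⟨a, ha, b', hb', hdel, ?_⟩
    have := length_mul_mul_le cs a x b'
    rw [hdel] at hdown ⊢
    omega

lemma exists_mul_mul_eq_of_length_add (hxK : ∀ a ∈ WP cs K, ℓ x ≤ ℓ (a * x))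
    (hxL : ∀ b ∈ WP cs L, ℓ (x * b) = ℓ x + ℓ b) {a b : W} (ha : a ∈ WP cs K)
    (hb : b ∈ WP cs L) :
    ∃ a' ∈ WP cs K, ∃ b' ∈ WP cs L,
      a * x * b = a' * x * b' ∧ ℓ (a * x * b) = ℓ a' + ℓ x + ℓ b' := by
  induction ha using Subgroup.closure_induction_left with
  | one => exact ⟨1, Subgroup.one_mem _, b, hb, rfl, by simp [hxL b hb]⟩
  | mul_left _ hs y _ ih | inv_mul_cancel _ hs y _ ih =>
    obtain ⟨i, hi, rfl⟩ := hs
    obtain ⟨a', ha', b', hb', heq, hlen⟩ := ih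
    have hy : s i * y * x * b = s i * (a' * x * b') := by simp only [← heq, mul_assoc]
    simp only [inv_simple, hy]
    exact exists_simple_mul_mul_mul_eq hxK hi ha' hb' (heq ▸ hlen)

lemma length_mul_of_forall_le (hx : ∀ a ∈ WP cs K, ℓ x ≤ ℓ (a * x)) {a : W} (ha : a ∈ WP cs K) :
    ℓ (a * x) = ℓ a + ℓ x := by
  obtain ⟨a', -, b', hb', heq, hlen⟩ := exists_mul_mul_eq_of_length_add (L := ∅) hx
    (by simp [WP_empty]) ha (Subgroup.one_mem _)
  rw [WP_empty, Subgroup.mem_bot] at hb'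
  subst hb'
  simp only [mul_one, mul_left_inj] at heq hlen
  rw [hlen, heq, cs.length_one, add_zero]

lemma IsMinL.le (h : IsMinL cs K x) {a : W} (ha : a ∈ WP cs K) : ℓ x ≤ ℓ (a * x) := by
  by_cases hax : a * x = x
  · rw [hax]
  · exact (h a ha hax).le

lemma IsMinL.length_mul (h : IsMinL cs K x) {a : W} (ha : a ∈ WP cs K) :
    ℓ (a * x) = ℓ a + ℓ x :=
  length_mul_of_forall_le (fun _ => h.le) ha

lemma isMinL_of_forall_le (h : ∀ a ∈ WP cs K, ℓ x ≤ ℓ (a * x)) : IsMinL cs K x := by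
  intro a ha hax
  have hlen := length_mul_of_forall_le h ha
  have : ℓ a ≠ 0 := fun h0 => hax (by rw [cs.length_eq_zero_iff.mp h0, one_mul])
  omega

lemma isMinR_iff_isMinL_inv : IsMinR cs K x ↔ IsMinL cs K x⁻¹ := by
  have hlen : ∀ a, ℓ (a * x⁻¹) = ℓ (x * a⁻¹) := fun a => by
    rw [← cs.length_inv, mul_inv_rev, inv_inv]
  have hfix : ∀ a, a * x⁻¹ = x⁻¹ ↔ x * a⁻¹ = x := fun a => by
    rw [← inv_inj, mul_inv_rev, inv_inv]
  constructor
  · intro h a ha hne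
    rw [hlen, cs.length_inv]
    exact h _ (Subgroup.inv_mem _ ha) ((hfix a).not.mp hne)
  · intro h b hb hne
    have := h b⁻¹ (Subgroup.inv_mem _ hb) ((hfix b⁻¹).not.mpr (by rwa [inv_inv]))
    rwa [hlen, inv_inv, cs.length_inv] at this

lemma IsMinR.length_mul (h : IsMinR cs L x) {b : W} (hb : b ∈ WP cs L) :
    ℓ (x * b) = ℓ x + ℓ b := by
  have := (isMinR_iff_isMinL_inv.mp h).length_mul (Subgroup.inv_mem _ hb)
  rwa [← mul_inv_rev, cs.length_inv, cs.length_inv, cs.length_inv, add_comm] at this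

lemma isMinDC_of_isMinL_of_isMinR (hK : IsMinL cs K x) (hL : IsMinR cs L x) :
    IsMinDC cs K L x := by
  intro a ha b hb hne
  obtain ⟨a', -, b', -, heq, hlen⟩ :=
    exists_mul_mul_eq_of_length_add (fun _ => hK.le) (fun _ => hL.length_mul) ha hb
  have : a' ≠ 1 ∨ b' ≠ 1 := by
    by_contra! h
    rw [h.1, h.2, one_mul, mul_one] at heq
    exact hne heq
  rcases this with h | h <;> have := cs.length_eq_zero_iff.not.mpr h <;> omega

lemma IsMinDC.isMinOf {K L : Set B} {x : W} (h : IsMinDC cs K L x) {a c g : W}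
    (ha : a ∈ WP cs K) (hc : c ∈ WP cs L) (hg : g = a * x * c) : IsMinOf cs K L g x := by
  refine ⟨⟨a⁻¹, Subgroup.inv_mem _ ha, c⁻¹, Subgroup.inv_mem _ hc, by rw [hg]; group⟩,
    fun a' ha' b' hb' hne => ?_⟩
  have hg' : a' * g * b' = a' * a * x * (c * b') := by rw [hg]; group
  rw [hg'] at hne ⊢
  exact h _ (Subgroup.mul_mem _ ha' ha) _ (Subgroup.mul_mem _ hc hb') hne

lemma isMinL_iff_forall_simple : IsMinL cs K x ↔ ∀ i ∈ K, ℓ x < ℓ (s i * x) := by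
  refine ⟨fun h i hi => h _ (simple_mem_WP hi) (simple_mul_ne_self cs x i), fun h => ?_⟩
  obtain ⟨a₀, ha₀, hmin⟩ :=
    (measure fun a => ℓ (a * x)).wf.has_min (WP cs K) ⟨1, Subgroup.one_mem _⟩
  have hmin' : ∀ a ∈ WP cs K, ℓ (a₀ * x) ≤ ℓ (a * (a₀ * x)) := fun a ha => by
    rw [← mul_assoc]
    exact not_lt.mp (hmin _ (Subgroup.mul_mem _ ha ha₀))
  -- a descent `s i` of `a₀⁻¹` in `K` would be a descent of `x = a₀⁻¹ * (a₀ * x)`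
  obtain rfl : a₀ = 1 := by
    by_contra hne
    obtain ⟨i, hi, hdesc⟩ :=
      exists_length_simple_mul_lt_of_mem_WP (Subgroup.inv_mem _ ha₀) (inv_ne_one.mpr hne)
    have hx := length_mul_of_forall_le hmin' (Subgroup.inv_mem _ ha₀)
    have hsx := cs.length_mul_le (s i * a₀⁻¹) (a₀ * x)
    rw [inv_mul_cancel_left] at hx
    rw [mul_assoc, inv_mul_cancel_left] at hsx
    have := h i hi
    omega
  exact isMinL_of_forall_le (by simpa using hmin')

lemma isMinR_iff_forall_simple : IsMinR cs L x ↔ ∀ i ∈ L, ℓ x < ℓ (x * s i) := by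
  rw [isMinR_iff_isMinL_inv, isMinL_iff_forall_simple]
  refine forall₂_congr fun i _ => ?_
  rw [← cs.length_inv (s i * x⁻¹), mul_inv_rev, inv_inv, inv_simple, cs.length_inv]

/-- Deodhar's lemma. -/
lemma IsMinR.simple_mul_or_exists (hx : IsMinR cs L x) {i : B} (hi : ℓ x < ℓ (s i * x)) :
    IsMinR cs L (s i * x) ∨ ∃ k ∈ L, s i * x = x * s k := by
  by_cases hall : ∀ k ∈ L, ℓ (s i * x) < ℓ (s i * x * s k)
  · exact Or.inl (isMinR_iff_forall_simple.mpr hall)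
  obtain ⟨k, hk, hdesc⟩ : ∃ k ∈ L, ℓ (s i * x * s k) ≤ ℓ (s i * x) := by simpa using hall
  have hxk := hx.length_mul (simple_mem_WP hk)
  have := cs.length_mul_simple (s i * x) k
  have := cs.length_simple_mul x i
  rw [cs.length_simple] at hxk
  rcases exchange_mul (simple_mem_WP hk) (x := x)
      (show ℓ (s i * (x * s k)) < ℓ (x * s k) by rw [← mul_assoc]; omega) with
    hlt | ⟨y, -, hy, hylen⟩
  · omega
  · rw [cs.length_simple, Nat.lt_one_iff, cs.length_eq_zero_iff] at hylen
    rw [hylen, mul_one, ← mul_assoc] at hy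
    exact Or.inr ⟨k, hk, by rw [← cs.simple_mul_simple_cancel_right (w := s i * x) k, hy]⟩

end MinimalRepresentatives

/-! ### The sequences in `S(J, ε)` -/

lemma pr_succ (u : ℕ → W) (n : ℕ) : pr u (n + 1) = pr u n * u n := by
  simp [pr, List.range_succ]

lemma pr_eq_of_forall_eq_one {u : ℕ → W} {N : ℕ} (hN : ∀ m, N < m → u m = 1) {m : ℕ}
    (hm : N ≤ m) : pr u (m + 1) = pr u (N + 1) := by
  induction m, hm using Nat.le_induction with
  | base => rfl
  | succ m hm ih => rw [pr_succ, hN (m + 1) (by omega), mul_one, ih]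

namespace SSeq

variable {f : B ≃ B} {J : Set B} (S : SSeq cs f J) {n : ℕ}

lemma exists_pr_eq_mul {m : ℕ} (h : n ≤ m) :
    ∃ c ∈ WP cs (S.Jn n), pr S.u (m + 1) = pr S.u (n + 1) * c := by
  induction m, h using Nat.le_induction with
  | base => exact ⟨1, Subgroup.one_mem _, (mul_one _).symm⟩
  | succ m hm ih =>
    obtain ⟨c, hc, heq⟩ := ih
    have hJ : S.Jn m ⊆ S.Jn n := antitone_nat_of_succ_le S.hmono hm
    refine ⟨c * S.u (m + 1), Subgroup.mul_mem _ hc (WP_mono hJ (S.hd m)), ?_⟩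
    rw [pr_succ, heq, mul_assoc]

lemma isMinR_succ (hR : IsMinR cs (S.Jn n) (pr S.u (n + 1))) :
    IsMinR cs (S.Jn (n + 1)) (pr S.u (n + 1 + 1)) := by
  intro b hb hne
  rw [pr_succ] at hne ⊢
  have hub : S.u (n + 1) * b ∈ WP cs (S.Jn n) :=
    Subgroup.mul_mem _ (S.hd n) (WP_mono (S.hmono n) hb)
  have := (S.he (n + 1)).2 b hb fun h => hne (by rw [mul_assoc, h])
  rw [mul_assoc, hR.length_mul hub, hR.length_mul (S.hd n)]
  omega

lemma adSet_subset_succ (hL : IsMinL cs (f '' J) (pr S.u (n + 1)))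
    (hR : IsMinR cs (S.Jn n) (pr S.u (n + 1)))
    (hAd : f '' J ∩ AdSet cs (pr S.u (n + 1)) (S.Jn n) ⊆ f '' S.Jn n) :
    f '' J ∩ AdSet cs (pr S.u (n + 1 + 1)) (S.Jn (n + 1)) ⊆ f '' S.Jn (n + 1) := by
  rintro p ⟨hp, q, hq, hpq⟩
  have ht : S.u (n + 1) * s q * (S.u (n + 1))⁻¹ ∈ WP cs (S.Jn n) := Subgroup.mul_mem _
    (Subgroup.mul_mem _ (S.hd n) (simple_mem_WP (S.hmono n hq))) (Subgroup.inv_mem _ (S.hd n))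
  have hpx : s p * pr S.u (n + 1) * (S.u (n + 1) * s q * (S.u (n + 1))⁻¹)⁻¹ = pr S.u (n + 1) := by
    rw [hpq, pr_succ]
    group
  have hlt := isMinL_iff_forall_simple.mp hL p hp
  rcases hR.simple_mul_or_exists hlt with hR' | ⟨k, hk, hk'⟩
  · have := hR'.length_mul (Subgroup.inv_mem _ ht)
    rw [hpx] at this
    omega
  · have hpk : s p = pr S.u (n + 1) * s k * (pr S.u (n + 1))⁻¹ := by rw [← hk']; group
    rw [S.hb n]
    exact ⟨hAd ⟨hp, k, hk, hpk⟩, k, hk, hpk⟩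

lemma isMinL_succ (hL : IsMinL cs (f '' J) (pr S.u (n + 1)))
    (hR : IsMinR cs (S.Jn n) (pr S.u (n + 1)))
    (hAd : f '' J ∩ AdSet cs (pr S.u (n + 1)) (S.Jn n) ⊆ f '' S.Jn n) :
    IsMinL cs (f '' J) (pr S.u (n + 1 + 1)) := by
  rw [isMinL_iff_forall_simple]
  intro p hp
  have hu := S.hd n
  have hlt := isMinL_iff_forall_simple.mp hL p hp
  rw [pr_succ, hR.length_mul hu, ← mul_assoc]
  rcases hR.simple_mul_or_exists hlt with hR' | ⟨k, hk, hk'⟩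
  · rw [hR'.length_mul hu]
    omega
  · have hpk : s p = pr S.u (n + 1) * s k * (pr S.u (n + 1))⁻¹ := by rw [← hk']; group
    have hkJ' : k ∈ S.J'n (n + 1) := by
      rw [S.hc n]
      exact ⟨hk, p, hAd ⟨hp, k, hk, hpk⟩, by rw [hpk]; group⟩
    have := isMinL_iff_forall_simple.mp (S.he (n + 1)).1 k hkJ'
    rw [hk', mul_assoc, hR.length_mul (Subgroup.mul_mem _ (simple_mem_WP hk) hu)]
    omega

lemma isMinL_and_isMinR_and_adSet_subset (n : ℕ) :
    IsMinL cs (f '' J) (pr S.u (n + 1)) ∧ IsMinR cs (S.Jn n) (pr S.u (n + 1)) ∧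
      f '' J ∩ AdSet cs (pr S.u (n + 1)) (S.Jn n) ⊆ f '' S.Jn n := by
  induction n with
  | zero =>
    have h1 : pr S.u (0 + 1) = S.u 0 := by simp [pr]
    refine ⟨?_, ?_, ?_⟩
    · rw [h1, ← S.hJ'0]
      exact (S.he 0).1
    · rw [h1]
      exact (S.he 0).2
    · rw [S.hJ0]
      exact Set.inter_subset_left
  | succ n ih =>
    obtain ⟨hL, hR, hAd⟩ := ih
    exact ⟨S.isMinL_succ hL hR hAd, S.isMinR_succ hR, S.adSet_subset_succ hL hR hAd⟩

end SSeq

end Coxeter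

theorem statement6_general (cs : CoxeterSystem M W) (f : B ≃ B) (J : Set B)
    (s : SSeq cs f J) (N : ℕ) (hN : ∀ m, N < m → s.u m = 1) :
    ∀ n, IsMinOf cs (f '' J) (s.Jn n) (pr s.u (N + 1)) (pr s.u (n + 1)) := by
  intro n
  obtain ⟨hL, hR, -⟩ := s.isMinL_and_isMinR_and_adSet_subset n
  obtain ⟨c, hc, hwc⟩ := s.exists_pr_eq_mul (le_max_left n N)
  rw [pr_eq_of_forall_eq_one hN (le_max_right n N)] at hwc
  exact (isMinDC_of_isMinL_of_isMinR hL hR).isMinOf (Subgroup.one_mem _) hc (by rw [hwc, one_mul])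

/-- 2.5(a): for `(J_n, J'_n, u_n) ∈ S(J, ε)` with `u_m = 1` for `m > N` and
`w = u_0 ⋯ u_N`, each partial product `u_0 u_1 ⋯ u_n` is the unique minimal
length element of the double coset `W_{J'} w W_{J_n}`. -/
theorem statement6 (cs : CoxeterSystem M W) (f : B ≃ B) (e : W ≃* W)
    (hef : ∀ b, e (cs.simple b) = cs.simple (f b)) (J : Set B)
    (s : SSeq cs f J) (N : ℕ) (hN : ∀ m, N < m → s.u m = 1) :
    ∀ n, IsMinOf cs (f '' J) (s.Jn n) (pr s.u (N + 1)) (pr s.u (n + 1)) :=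
  statement6_general cs f J s N hN

end Lusztig
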